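/- arXiv:1511.01746 — 4 statements merged into one kernel-verified Lean document; each statement's English description precedes it below -/
import Mathlib

section
/- Let (γ(t))_{t∈I} be an almost surely continuous real-valued stochastic process on an interval I of length δ. Suppose there exist constants C>0, α>1, β≥0 such that for every ε>0 and all s,t ∈ I, P(|γ(t)−γ(s)| ≥ ε) ≤ C|t−s|^α/ε^β. Then there is a constant C̃ (depending only on C, α, β) such that P(sup_{s,t∈I} |γ(t)−γ(s)| ≥ ε) ≤ C̃ δ^α/ε^β. -/
open MeasureTheory Finset Filter

noncomputable def dyp (a b : ℝ) (n k : ℕ) : ℝ := a + k * (b - a) / 2 ^ n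

lemma dyp_mem {a b : ℝ} (hab : a ≤ b) {n k : ℕ} (hk : k ≤ 2 ^ n) :
    dyp a b n k ∈ Set.Icc a b := by
  unfold dyp
  constructor
  · have hba : (0:ℝ) ≤ b - a := by linarith
    have : (0:ℝ) ≤ k * (b - a) / 2 ^ n := by positivity
    linarith
  · have h1 : (k:ℝ) ≤ 2 ^ n := by exact_mod_cast hk
    have h2 : (k:ℝ) * (b - a) ≤ 2 ^ n * (b - a) := by nlinarith
    have h3 : (k:ℝ) * (b - a) / 2 ^ n ≤ b - a := by
      rw [div_le_iff₀ (by positivity)]; nlinarith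
    linarith

lemma dyp_half (a b : ℝ) (n k : ℕ) : dyp a b n k = dyp a b (n+1) (2*k) := by
  unfold dyp
  push_cast
  field_simp
  ring

lemma chain_dyadic {a b : ℝ} (f : ℝ → ℝ) (e : ℕ → ℝ) (he : ∀ m, 0 ≤ e m)
    (H : ∀ m : ℕ, ∀ k < 2 ^ m, |f (dyp a b m (k+1)) - f (dyp a b m k)| ≤ e m) :
    ∀ n : ℕ, ∀ k ≤ 2 ^ n, |f (dyp a b n k) - f a| ≤ ∑ m ∈ range (n+1), e m := by
  intro n
  induction n with
  | zero =>
    intro k hk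
    interval_cases k
    · simp [dyp, he 0]
    · have := H 0 0 (by norm_num)
      simpa [dyp] using this
  | succ n ih =>
    intro k hk
    set k' := k / 2 with hk'
    have hk'le : k' ≤ 2 ^ n := by
      rw [hk']
      exact Nat.div_le_of_le_mul (by omega)
    have hIH := ih k' hk'le
    rw [dyp_half a b n k'] at hIH
    rcases Nat.even_or_odd k with ⟨c, hc⟩ | ⟨c, hc⟩
    · have : k = 2 * k' := by omega
      rw [this]
      calc |f (dyp a b (n+1) (2*k')) - f a| ≤ ∑ m ∈ range (n+1), e m := hIH
        _ ≤ ∑ m ∈ range (n+2), e m := by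
            have hs : ∑ m ∈ range (n+2), e m = ∑ m ∈ range (n+1), e m + e (n+1) :=
              Finset.sum_range_succ e (n+1)
            linarith [he (n+1)]
    · have hkk : k = 2 * k' + 1 := by omega
      have h2k' : 2 * k' < 2 ^ (n+1) := by omega
      have hH := H (n+1) (2*k') h2k'
      rw [hkk]
      calc |f (dyp a b (n+1) (2*k'+1)) - f a|
          ≤ |f (dyp a b (n+1) (2*k'+1)) - f (dyp a b (n+1) (2*k'))|
            + |f (dyp a b (n+1) (2*k')) - f a| := abs_sub_le _ _ _
        _ ≤ e (n+1) + ∑ m ∈ range (n+1), e m := add_le_add hH hIH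
        _ = ∑ m ∈ range (n+2), e m := by
            have hs : ∑ m ∈ range (n+2), e m = ∑ m ∈ range (n+1), e m + e (n+1) :=
              Finset.sum_range_succ e (n+1)
            linarith

lemma chain_all (hab : a ≤ b) {f : ℝ → ℝ} (hf : ContinuousOn f (Set.Icc a b))
    (e : ℕ → ℝ) (he : ∀ m, 0 ≤ e m) (hsum : Summable e)
    (H : ∀ m : ℕ, ∀ k < 2 ^ m, |f (dyp a b m (k+1)) - f (dyp a b m k)| ≤ e m) :
    ∀ t ∈ Set.Icc a b, |f t - f a| ≤ ∑' m, e m := by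
  intro t ht
  rcases eq_or_lt_of_le hab with rfl | hab'
  · have : t = a := le_antisymm ht.2 ht.1
    simp [this]
    exact tsum_nonneg he
  · have hδ : (0:ℝ) < b - a := by linarith
    set x := t - a with hx
    have hx0 : 0 ≤ x := by simp [hx]; linarith [ht.1]
    have hx1 : x ≤ b - a := by simp [hx]; linarith [ht.2]
    set kseq : ℕ → ℕ := fun n => ⌊x * 2 ^ n / (b - a)⌋₊ with hkseq
    have hkle : ∀ n, kseq n ≤ 2 ^ n := by
      intro n
      have h1 : x * 2 ^ n / (b - a) ≤ ((2 ^ n : ℕ) : ℝ) := by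
        push_cast
        rw [div_le_iff₀ hδ]
        nlinarith [pow_pos (show (0:ℝ) < 2 by norm_num) n]
      calc kseq n ≤ ⌊((2 ^ n : ℕ) : ℝ)⌋₊ := Nat.floor_le_floor h1
        _ = 2 ^ n := Nat.floor_natCast _
    have hseqmem : ∀ n, dyp a b n (kseq n) ∈ Set.Icc a b := fun n => dyp_mem hab (hkle n)
    have hdist : ∀ n, |dyp a b n (kseq n) - t| ≤ (b - a) * (1/2) ^ n := by
      intro n
      have hfl : (kseq n : ℝ) ≤ x * 2 ^ n / (b - a) := Nat.floor_le (by positivity)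
      have hfu : x * 2 ^ n / (b - a) < kseq n + 1 := Nat.lt_floor_add_one _
      have h2 : (0:ℝ) < 2 ^ n := by positivity
      have e1 : (kseq n : ℝ) * (b - a) / 2 ^ n ≤ x := by
        rw [div_le_iff₀ h2]
        calc (kseq n : ℝ) * (b - a) ≤ (x * 2 ^ n / (b - a)) * (b - a) := by nlinarith
          _ = x * 2 ^ n := by field_simp
      have e2 : x < ((kseq n : ℝ) + 1) * (b - a) / 2 ^ n := by
        rw [lt_div_iff₀ h2]
        calc x * 2 ^ n = (x * 2 ^ n / (b - a)) * (b - a) := by field_simp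
          _ < ((kseq n : ℝ) + 1) * (b - a) := by nlinarith
      have : x - (kseq n : ℝ) * (b - a) / 2 ^ n < (b - a) / 2 ^ n := by
        have : ((kseq n : ℝ) + 1) * (b - a) / 2 ^ n
            = (kseq n : ℝ) * (b - a) / 2 ^ n + (b - a) / 2 ^ n := by ring
        linarith
      have habs : |dyp a b n (kseq n) - t| = x - (kseq n : ℝ) * (b - a) / 2 ^ n := by
        rw [abs_sub_comm]
        rw [abs_of_nonneg]
        · simp [dyp, hx]; ring
        · simp [dyp, hx]; linarith
      rw [habs]
      have : (b - a) / 2 ^ n = (b - a) * (1/2) ^ n := by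
        rw [div_pow, one_pow]; ring
      linarith
    have htend : Tendsto (fun n => dyp a b n (kseq n)) atTop (nhds t) := by
      rw [tendsto_iff_dist_tendsto_zero]
      have hg : Tendsto (fun n : ℕ => (b - a) * (1/2:ℝ) ^ n) atTop (nhds 0) := by
        have h0 := (tendsto_pow_atTop_nhds_zero_of_lt_one (by norm_num : (0:ℝ) ≤ 1/2)
          (by norm_num : (1:ℝ)/2 < 1)).const_mul (b - a)
        rwa [mul_zero] at h0
      exact squeeze_zero (fun n => dist_nonneg)
        (fun n => by simpa [Real.dist_eq] using hdist n) hg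
    have htendf : Tendsto (fun n => f (dyp a b n (kseq n))) atTop (nhds (f t)) := by
      apply ((hf t ht).tendsto).comp
      rw [tendsto_nhdsWithin_iff]
      exact ⟨htend, Filter.Eventually.of_forall hseqmem⟩
    have htendabs : Tendsto (fun n => |f (dyp a b n (kseq n)) - f a|) atTop
        (nhds (|f t - f a|)) := (htendf.sub tendsto_const_nhds).abs
    refine le_of_tendsto htendabs (Filter.Eventually.of_forall fun n => ?_)
    calc |f (dyp a b n (kseq n)) - f a| ≤ ∑ m ∈ range (n+1), e m :=
          chain_dyadic f e he H n (kseq n) (hkle n)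
      _ ≤ ∑' m, e m := Summable.sum_le_tsum _ (fun i _ => he i) hsum


lemma term_identity (r β : ℝ) (c δ C : ℝ) (hc : 0 < c) (hδ : 0 ≤ δ)
    (α : ℝ) :
    ∀ m : ℕ, (2:ℝ)^m * (C * (δ/2^m)^α / (c*((2:ℝ)^(-r))^m)^β)
      = (C * δ^α / c^β) * ((2:ℝ)^((1:ℝ)-α+r*β))^m := by
  intro m
  have h2 : (0:ℝ) < 2 := two_pos
  have hq0 : (0:ℝ) < (2:ℝ)^(-r) := Real.rpow_pos_of_pos h2 _
  have e1 : ((2:ℝ)^m : ℝ) = (2:ℝ)^(m:ℝ) := (Real.rpow_natCast 2 m).symm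
  have e2 : ((2:ℝ)^(-r))^m = (2:ℝ)^(-r*(m:ℝ)) := by
    rw [← Real.rpow_natCast ((2:ℝ)^(-r)) m, ← Real.rpow_mul h2.le]
  have e3 : ((2:ℝ)^((1:ℝ)-α+r*β))^m = (2:ℝ)^(((1:ℝ)-α+r*β)*(m:ℝ)) := by
    rw [← Real.rpow_natCast ((2:ℝ)^((1:ℝ)-α+r*β)) m, ← Real.rpow_mul h2.le]
  rw [e1, e2, e3]
  rw [Real.div_rpow hδ (Real.rpow_nonneg h2.le _),
      Real.mul_rpow hc.le (Real.rpow_nonneg h2.le _),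
      ← Real.rpow_mul h2.le, ← Real.rpow_mul h2.le]
  have key : (2:ℝ)^(((1:ℝ)-α+r*β)*(m:ℝ)) = (2:ℝ)^(m:ℝ) / ((2:ℝ)^((m:ℝ)*α) * (2:ℝ)^(-r*(m:ℝ)*β)) := by
    rw [eq_div_iff (by positivity)]
    rw [← Real.rpow_add h2, ← Real.rpow_add h2]
    congr 1; ring
  rw [key]
  have n1 : ((2:ℝ)^((m:ℝ)*α)) ≠ 0 := (Real.rpow_pos_of_pos h2 _).ne'
  have n2 : ((2:ℝ)^(-r*(m:ℝ)*β)) ≠ 0 := (Real.rpow_pos_of_pos h2 _).ne'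
  have n3 : c^β ≠ 0 := (Real.rpow_pos_of_pos hc _).ne'
  field_simp

theorem maximal_inequality_continuous_process (C α β : ℝ) (hC : 0 < C)
    (hα : 1 < α) (hβ : 0 ≤ β) :
    ∃ Ctilde > 0, ∀ (Ω : Type) (_ : MeasurableSpace Ω) (μ : Measure Ω),
      IsProbabilityMeasure μ →
      ∀ (γ : ℝ → Ω → ℝ) (a b : ℝ), a ≤ b →
        (∀ᵐ ω ∂μ, ContinuousOn (fun t => γ t ω) (Set.Icc a b)) →
        (∀ ε > (0:ℝ), ∀ s ∈ Set.Icc a b, ∀ t ∈ Set.Icc a b,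
          μ {ω | ε ≤ |γ t ω - γ s ω|} ≤ ENNReal.ofReal (C * |t - s| ^ α / ε ^ β)) →
        ∀ ε > (0:ℝ),
          μ {ω | ε ≤ ⨆ s ∈ Set.Icc a b, ⨆ t ∈ Set.Icc a b, |γ t ω - γ s ω|}
            ≤ ENNReal.ofReal (Ctilde * (b - a) ^ α / ε ^ β) := by
  have h2 : (0:ℝ) < 2 := two_pos
  set r : ℝ := (α - 1) / (2 * (β + 1)) with hrdef
  have hr : 0 < r := div_pos (by linarith) (by linarith)
  set q : ℝ := (2:ℝ) ^ (-r) with hqdef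
  have hq0 : 0 < q := Real.rpow_pos_of_pos h2 _
  have hq1 : q < 1 := Real.rpow_lt_one_of_one_lt_of_neg one_lt_two (by linarith)
  have hexp : (1:ℝ) - α + r * β < 0 := by
    have h1 : r * β < α - 1 := by
      rw [hrdef, div_mul_eq_mul_div, div_lt_iff₀ (by linarith)]
      nlinarith
    linarith
  set ρ : ℝ := (2:ℝ) ^ ((1:ℝ) - α + r * β) with hρdef
  have hρ0 : 0 < ρ := Real.rpow_pos_of_pos h2 _
  have hρ1 : ρ < 1 := Real.rpow_lt_one_of_one_lt_of_neg one_lt_two hexp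
  set D : ℝ := ((1 - q)/4) ^ (-β) with hDdef
  have hD : 0 < D := Real.rpow_pos_of_pos (by linarith) _
  refine ⟨C * D / (1 - ρ), div_pos (mul_pos hC hD) (by linarith), ?_⟩
  intro Ω inst μ hμ γ a b hab hcont hyp ε hε
  set δ : ℝ := b - a with hδdef
  have hδ0 : (0:ℝ) ≤ δ := by linarith
  set c : ℝ := ε / 4 * (1 - q) with hcdef
  have hc : 0 < c := by
    have : 0 < 1 - q := by linarith
    positivity
  -- the events
  set E : ℕ → ℕ → Set Ω := fun m k =>
    {ω | c * q ^ m ≤ |γ (dyp a b m (k+1)) ω - γ (dyp a b m k) ω|} with hEdef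
  -- the error sequence
  set e : ℕ → ℝ := fun m => c * q ^ m with hedef
  have he : ∀ m, 0 ≤ e m := fun m => by positivity
  have hesum : Summable e := (summable_geometric_of_lt_one hq0.le hq1).mul_left c
  have hetsum : ∑' m, e m = ε / 4 := by
    rw [hedef]
    rw [tsum_mul_left, tsum_geometric_of_lt_one hq0.le hq1]
    have h1q : (1 - q) ≠ 0 := by linarith
    rw [hcdef]
    field_simp
  -- inclusion
  have hsub : {ω | ε ≤ ⨆ s ∈ Set.Icc a b, ⨆ t ∈ Set.Icc a b, |γ t ω - γ s ω|}
      ⊆ (⋃ m, ⋃ k ∈ Finset.range (2^m), E m k)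
        ∪ {ω | ¬ ContinuousOn (fun t => γ t ω) (Set.Icc a b)} := by
    intro ω hω
    by_cases hcω : ContinuousOn (fun t => γ t ω) (Set.Icc a b)
    · left
      by_contra hnot
      simp only [Set.mem_iUnion, not_exists, Finset.mem_range] at hnot
      have H : ∀ m : ℕ, ∀ k < 2 ^ m,
          |γ (dyp a b m (k+1)) ω - γ (dyp a b m k) ω| ≤ e m := by
        intro m k hk
        have := hnot m k hk
        rw [hEdef] at this
        simp only [Set.mem_setOf_eq, not_le] at this
        exact this.le
      have hchain := chain_all hab hcω e he hesum H
      have hpair : ∀ s ∈ Set.Icc a b, ∀ t ∈ Set.Icc a b, |γ t ω - γ s ω| ≤ ε / 2 := by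
        intro s hs t ht
        have h1 := hchain s hs
        have h2' := hchain t ht
        rw [hetsum] at h1 h2'
        calc |γ t ω - γ s ω| ≤ |γ t ω - γ a ω| + |γ a ω - γ s ω| := abs_sub_le _ _ _
          _ ≤ ε / 4 + ε / 4 := by
              rw [abs_sub_comm (γ a ω)]
              exact add_le_add h2' h1
          _ = ε / 2 := by ring
      have hsup : (⨆ s ∈ Set.Icc a b, ⨆ t ∈ Set.Icc a b, |γ t ω - γ s ω|) ≤ ε / 2 := by
        refine Real.iSup_le (fun s => Real.iSup_le (fun hs =>
          Real.iSup_le (fun t => Real.iSup_le (fun ht => hpair s hs t ht)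
            (by linarith)) (by linarith)) (by linarith)) (by linarith)
      rw [Set.mem_setOf_eq] at hω
      linarith
    · right; exact hcω
  -- measure bound
  have hbad : μ {ω | ¬ ContinuousOn (fun t => γ t ω) (Set.Icc a b)} = 0 := by
    exact hcont
  have step1 : μ {ω | ε ≤ ⨆ s ∈ Set.Icc a b, ⨆ t ∈ Set.Icc a b, |γ t ω - γ s ω|}
      ≤ μ (⋃ m, ⋃ k ∈ Finset.range (2^m), E m k) := by
    calc μ _ ≤ μ ((⋃ m, ⋃ k ∈ Finset.range (2^m), E m k)
          ∪ {ω | ¬ ContinuousOn (fun t => γ t ω) (Set.Icc a b)}) := measure_mono hsub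
      _ ≤ μ (⋃ m, ⋃ k ∈ Finset.range (2^m), E m k)
          + μ {ω | ¬ ContinuousOn (fun t => γ t ω) (Set.Icc a b)} := measure_union_le _ _
      _ = μ (⋃ m, ⋃ k ∈ Finset.range (2^m), E m k) := by rw [hbad, add_zero]
  -- single event bound
  have hev : ∀ m : ℕ, ∀ k < 2 ^ m,
      μ (E m k) ≤ ENNReal.ofReal (C * (δ / 2 ^ m) ^ α / (c * q ^ m) ^ β) := by
    intro m k hk
    have hεm : 0 < c * q ^ m := by positivity
    have hs : dyp a b m k ∈ Set.Icc a b := dyp_mem hab hk.le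
    have ht : dyp a b m (k+1) ∈ Set.Icc a b := dyp_mem hab hk
    have hdiff : dyp a b m (k+1) - dyp a b m k = δ / 2 ^ m := by
      rw [hδdef]; unfold dyp; push_cast; field_simp; ring
    have := hyp (c * q ^ m) hεm (dyp a b m k) hs (dyp a b m (k+1)) ht
    rw [hdiff, abs_of_nonneg (by positivity)] at this
    exact this
  -- sum over k
  have step2 : ∀ m : ℕ, ∑ k ∈ Finset.range (2^m), μ (E m k)
      ≤ ENNReal.ofReal ((2:ℝ)^m * (C * (δ / 2 ^ m) ^ α / (c * q ^ m) ^ β)) := by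
    intro m
    calc ∑ k ∈ Finset.range (2^m), μ (E m k)
        ≤ ∑ _k ∈ Finset.range (2^m),
            ENNReal.ofReal (C * (δ / 2 ^ m) ^ α / (c * q ^ m) ^ β) :=
          Finset.sum_le_sum (fun k hk => hev m k (Finset.mem_range.1 hk))
      _ = (2^m : ℕ) • ENNReal.ofReal (C * (δ / 2 ^ m) ^ α / (c * q ^ m) ^ β) := by
          rw [Finset.sum_const, Finset.card_range]
      _ = ENNReal.ofReal ((2:ℝ)^m * (C * (δ / 2 ^ m) ^ α / (c * q ^ m) ^ β)) := by
          rw [nsmul_eq_mul, ← ENNReal.ofReal_natCast (2^m),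
            ← ENNReal.ofReal_mul (Nat.cast_nonneg _)]
          congr 1
          push_cast
          ring
  -- total
  set K : ℝ := C * δ ^ α / c ^ β with hKdef
  have hK0 : 0 ≤ K := by positivity
  have hterm := term_identity r β c δ C hc hδ0 α
  have hKsum : Summable (fun m : ℕ => K * ρ ^ m) :=
    (summable_geometric_of_lt_one hρ0.le hρ1).mul_left K
  have step3 : μ (⋃ m, ⋃ k ∈ Finset.range (2^m), E m k)
      ≤ ENNReal.ofReal (∑' m : ℕ, K * ρ ^ m) := by
    calc μ (⋃ m, ⋃ k ∈ Finset.range (2^m), E m k)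
        ≤ ∑' m : ℕ, μ (⋃ k ∈ Finset.range (2^m), E m k) := measure_iUnion_le _
      _ ≤ ∑' m : ℕ, ENNReal.ofReal (K * ρ ^ m) := by
          refine ENNReal.tsum_le_tsum (fun m => ?_)
          calc μ (⋃ k ∈ Finset.range (2^m), E m k)
              ≤ ∑ k ∈ Finset.range (2^m), μ (E m k) := measure_biUnion_finset_le _ _
            _ ≤ ENNReal.ofReal ((2:ℝ)^m * (C * (δ / 2 ^ m) ^ α / (c * q ^ m) ^ β)) :=
                step2 m
            _ = ENNReal.ofReal (K * ρ ^ m) := by rw [← hterm m]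
      _ = ENNReal.ofReal (∑' m : ℕ, K * ρ ^ m) :=
          (ENNReal.ofReal_tsum_of_nonneg (fun m => by positivity) hKsum).symm
  -- final computation
  have hfinal : (∑' m : ℕ, K * ρ ^ m) = C * D / (1 - ρ) * δ ^ α / ε ^ β := by
    rw [tsum_mul_left, tsum_geometric_of_lt_one hρ0.le hρ1]
    have hcβ : c ^ β = ((1 - q)/4) ^ β * ε ^ β := by
      rw [← Real.mul_rpow (by linarith) hε.le]
      congr 1
      rw [hcdef]; ring
    have hDinv : D = (((1 - q)/4) ^ β)⁻¹ := by
      rw [hDdef, Real.rpow_neg (by linarith)]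
    have hne1 : ((1 - q)/4 : ℝ) ^ β ≠ 0 := (Real.rpow_pos_of_pos (by linarith) _).ne'
    have hne2 : (ε : ℝ) ^ β ≠ 0 := (Real.rpow_pos_of_pos hε _).ne'
    have hne3 : (1 - ρ : ℝ) ≠ 0 := by linarith
    rw [hKdef, hcβ, hDinv]
    field_simp
    try ring
    try exact Or.inl trivial
  calc μ _ ≤ μ (⋃ m, ⋃ k ∈ Finset.range (2^m), E m k) := step1
    _ ≤ ENNReal.ofReal (∑' m : ℕ, K * ρ ^ m) := step3
    _ = ENNReal.ofReal (C * D / (1 - ρ) * δ ^ α / ε ^ β) := by rw [hfinal]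
end

section
/- Let φ be an integrable real random variable on a probability space (X, m). Then for all y ∈ ℝ and δ > 0, ∫_{−δ}^{δ} t^{−4} · E[ |tφ| · 1_{|tφ|>1} ] · |sin(t y)| dt ≤ 4 E[φ²] · |y|, provided φ ∈ L²(m). -/
open MeasureTheory Set
open scoped ENNReal

/-!
Since `|sin (t y)| ≤ |t| |y|`, the integrand is at most `|y| |φ x| / t²` on `{1 < |t φ x|}`.
After exchanging the integrals (Tonelli), the inner integral `∫_{|t| > 1/|φ x|} t⁻² dt` equals
`2 |φ x|`, so the whole integral is at most `2 |y| E[φ²]`.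
-/

lemma lintegral_Ioi_inv_sq {a : ℝ} (ha : 0 < a) :
    ∫⁻ t in Ioi a, ENNReal.ofReal (1 / t ^ 2) = ENNReal.ofReal (1 / a) := by
  have hpow : ∀ t ∈ Ioi a, ENNReal.ofReal (1 / t ^ 2) = ENNReal.ofReal (t ^ (-2 : ℝ)) :=
    fun t ht => by simp [Real.rpow_neg (ha.trans ht).le]
  have hint : IntegrableOn (fun t : ℝ => t ^ (-2 : ℝ)) (Ioi a) :=
    integrableOn_Ioi_rpow_of_lt (by norm_num) ha
  rw [setLIntegral_congr_fun measurableSet_Ioi hpow,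
    ← ofReal_integral_eq_lintegral_ofReal hint
      ((ae_restrict_mem measurableSet_Ioi).mono fun t ht => Real.rpow_nonneg (ha.trans ht).le _),
    integral_Ioi_rpow_of_lt (by norm_num) ha]
  norm_num [Real.rpow_neg_one]

lemma lintegral_ite_lt_abs_inv_sq {a : ℝ} (ha : 0 < a) :
    ∫⁻ t, (if a < |t| then ENNReal.ofReal (1 / t ^ 2) else 0) = ENNReal.ofReal (2 / a) := by
  set f : ℝ → ℝ≥0∞ := fun t => ENNReal.ofReal (1 / t ^ 2)
  have hsplit : ∀ t,
      (if a < |t| then f t else 0) = (Ioi a).indicator f t + (Ioi a).indicator f (-t) := by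
    intro t
    simp only [f, indicator_apply, mem_Ioi, lt_abs, neg_sq]
    split_ifs <;> simp_all
    linarith
  have hf : Measurable ((Ioi a).indicator f) :=
    (by fun_prop : Measurable f).indicator measurableSet_Ioi
  rw [lintegral_congr hsplit, lintegral_add_left hf, lintegral_neg_eq_self ((Ioi a).indicator f),
    ← two_mul, lintegral_indicator measurableSet_Ioi, lintegral_Ioi_inv_sq ha,
    div_eq_mul_one_div 2 a, ENNReal.ofReal_mul zero_le_two, ENNReal.ofReal_ofNat]

lemma lintegral_ite_one_lt_abs_mul_inv_sq (c : ℝ) :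
    ∫⁻ t, (if 1 < |t * c| then ENNReal.ofReal (1 / t ^ 2) else 0)
      = ENNReal.ofReal (2 * |c|) := by
  rcases eq_or_ne c 0 with rfl | hc
  · norm_num
  have hc' : 0 < |c| := abs_pos.2 hc
  have hiff : ∀ t : ℝ, 1 < |t * c| ↔ |c|⁻¹ < |t| := fun t => by
    rw [abs_mul, inv_lt_iff_one_lt_mul₀ hc']
  simp_rw [hiff, lintegral_ite_lt_abs_inv_sq (inv_pos.2 hc'), div_inv_eq_mul]

lemma ofReal_inv_pow_four_mul_ite_mul_abs_sin_le (t u y : ℝ) :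
    ENNReal.ofReal (1 / t ^ 4 * (if 1 < |t * u| then |t * u| else 0) * |Real.sin (t * y)|)
      ≤ ENNReal.ofReal (|y| * |u|) * if 1 < |t * u| then ENNReal.ofReal (1 / t ^ 2) else 0 := by
  split_ifs with h
  · have ht : t ≠ 0 := by rintro rfl; simp at h; linarith
    rw [← ENNReal.ofReal_mul (by positivity)]
    refine ENNReal.ofReal_le_ofReal ?_
    calc 1 / t ^ 4 * |t * u| * |Real.sin (t * y)| ≤ 1 / t ^ 4 * |t * u| * |t * y| :=
          mul_le_mul_of_nonneg_left Real.abs_sin_le_abs (by positivity)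
      _ = |y| * |u| * (1 / t ^ 2) := by
          rw [abs_mul, abs_mul]
          field_simp
          rw [sq_abs]
  · simp

lemma ofReal_integral_le_lintegral_ofReal {α : Type*} [MeasurableSpace α] {μ : Measure α}
    {f : α → ℝ} (hf : 0 ≤ f) :
    ENNReal.ofReal (∫ a, f a ∂μ) ≤ ∫⁻ a, ENNReal.ofReal (f a) ∂μ := by
  calc ENNReal.ofReal (∫ a, f a ∂μ) = ‖∫ a, f a ∂μ‖ₑ :=
        (Real.enorm_of_nonneg (integral_nonneg hf)).symm
    _ ≤ ∫⁻ a, ‖f a‖ₑ ∂μ := enorm_integral_le_lintegral_enorm f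
    _ = ∫⁻ a, ENNReal.ofReal (f a) ∂μ := lintegral_congr fun a => Real.enorm_of_nonneg (hf a)

lemma lintegral_inv_pow_four_mul_integral_ite_mul_abs_sin_le {X : Type*} [MeasurableSpace X]
    {μ : Measure X} [SFinite μ] {φ : X → ℝ} (hφ : AEMeasurable φ μ) (y : ℝ) :
    ∫⁻ t, ENNReal.ofReal
        (1 / t ^ 4 * (∫ x, (if 1 < |t * φ x| then |t * φ x| else 0) ∂μ) * |Real.sin (t * y)|)
      ≤ ENNReal.ofReal (2 * |y|) * ∫⁻ x, ENNReal.ofReal (φ x ^ 2) ∂μ := by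
  set B : ℝ → X → ℝ≥0∞ := fun t x =>
    ENNReal.ofReal (|y| * |φ x|) * if 1 < |t * φ x| then ENNReal.ofReal (1 / t ^ 2) else 0
  have hB : AEMeasurable (Function.uncurry B) (volume.prod μ) := by
    have hG : Measurable fun p : ℝ × ℝ => ENNReal.ofReal (|y| * |p.2|) *
        if 1 < |p.1 * p.2| then ENNReal.ofReal (1 / p.1 ^ 2) else 0 :=
      (by fun_prop : Measurable _).mul <| Measurable.ite
        (measurableSet_lt measurable_const (by fun_prop)) (by fun_prop) measurable_const
    exact hG.comp_aemeasurable (measurable_fst.aemeasurable.prodMk hφ.comp_snd)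
  calc _ ≤ ∫⁻ t, ∫⁻ x, B t x ∂μ := lintegral_mono fun t => by
        rw [← integral_const_mul, ← integral_mul_const]
        exact (ofReal_integral_le_lintegral_ofReal fun x => by positivity).trans
          (lintegral_mono fun x => ofReal_inv_pow_four_mul_ite_mul_abs_sin_le t (φ x) y)
    _ = ∫⁻ x, (∫⁻ t, B t x) ∂μ := lintegral_lintegral_swap hB
    _ = ∫⁻ x, ENNReal.ofReal (2 * |y|) * ENNReal.ofReal (φ x ^ 2) ∂μ :=
        lintegral_congr fun x => by
          rw [lintegral_const_mul' _ _ ENNReal.ofReal_ne_top, lintegral_ite_one_lt_abs_mul_inv_sq,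
            ← ENNReal.ofReal_mul (by positivity), ← ENNReal.ofReal_mul (by positivity),
            ← sq_abs]
          ring_nf
    _ = ENNReal.ofReal (2 * |y|) * ∫⁻ x, ENNReal.ofReal (φ x ^ 2) ∂μ :=
        lintegral_const_mul' _ _ ENNReal.ofReal_ne_top

theorem large_part_bound_general {X : Type*} [MeasurableSpace X] (μ : Measure X)
    [IsProbabilityMeasure μ] (φ : X → ℝ) (hφ2 : MemLp φ 2 μ) :
    ∀ (y : ℝ) (δ : ℝ), 0 < δ →
      (∫ t in (-δ)..δ,
          (1 / t ^ 4) * (∫ x, (if 1 < |t * φ x| then |t * φ x| else 0) ∂μ)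
            * |Real.sin (t * y)|)
        ≤ 4 * (∫ x, (φ x) ^ 2 ∂μ) * |y| := by
  intro y δ hδ
  have hsq : 0 ≤ ∫ x, φ x ^ 2 ∂μ := integral_nonneg fun x => sq_nonneg _
  have hbound : ENNReal.ofReal (∫ t in Ioc (-δ) δ,
      1 / t ^ 4 * (∫ x, (if 1 < |t * φ x| then |t * φ x| else 0) ∂μ) * |Real.sin (t * y)|)
      ≤ ENNReal.ofReal (2 * |y| * ∫ x, φ x ^ 2 ∂μ) := by
    calc _ ≤ ∫⁻ t in Ioc (-δ) δ, ENNReal.ofReal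
            (1 / t ^ 4 * (∫ x, (if 1 < |t * φ x| then |t * φ x| else 0) ∂μ)
              * |Real.sin (t * y)|) :=
          ofReal_integral_le_lintegral_ofReal fun t => by positivity
      _ ≤ _ := (setLIntegral_le_lintegral _ _).trans <|
          lintegral_inv_pow_four_mul_integral_ite_mul_abs_sin_le
            hφ2.aestronglyMeasurable.aemeasurable y
      _ = _ := by
          rw [← ofReal_integral_eq_lintegral_ofReal hφ2.integrable_sq
            (Filter.Eventually.of_forall fun x => sq_nonneg _),
            ← ENNReal.ofReal_mul (by positivity)]
  rw [intervalIntegral.integral_of_le (by linarith)]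
  refine ((ENNReal.ofReal_le_ofReal_iff (by positivity)).1 hbound).trans ?_
  nlinarith [mul_nonneg (abs_nonneg y) hsq]

theorem large_part_bound {X : Type*} [MeasurableSpace X] (μ : Measure X)
    [IsProbabilityMeasure μ] (φ : X → ℝ) (hφ1 : Integrable φ μ) (hφ2 : MemLp φ 2 μ) :
    ∀ (y : ℝ) (δ : ℝ), 0 < δ →
      (∫ t in (-δ)..δ,
          (1 / t ^ 4) * (∫ x, (if 1 < |t * φ x| then |t * φ x| else 0) ∂μ)
            * |Real.sin (t * y)|)
        ≤ 4 * (∫ x, (φ x) ^ 2 ∂μ) * |y| :=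
  large_part_bound_general μ φ hφ2
end

section
/- Let K ⊆ ℝ be compact and let P : ℝ → Hom(B, B) be a continuous map into the bounded operators on a Banach space B such that the spectral radius ρ(P(t)) < 1 for every t ∈ K. Then there exist constants C > 0 and 0 < r < 1 such that ‖P(t)^n‖ ≤ C r^n for all t ∈ K and all n ∈ ℕ. -/
/-! Gelfand's formula gives, for each `t ∈ K`, a power `N` and some `r < 1` with
`‖P t ^ N‖ < r ^ N`. By continuity this strict inequality, together with bounds on the finitely
many powers below `N`, persists on a neighbourhood of `t`, and submultiplicativity of the norm
then gives `‖P s ^ n‖ ≤ C * r ^ n` there. Compactness patches finitely many such neighbourhoods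
together, taking the largest `C` and `r`. -/

open Filter Topology

section NormedRing

variable {X A : Type*} [NormedRing A]

def UniformPowerDecayOn (f : X → A) (S : Set X) : Prop :=
  ∃ C > 0, ∃ r : ℝ, 0 < r ∧ r < 1 ∧ ∀ t ∈ S, ∀ n : ℕ, ‖f t ^ n‖ ≤ C * r ^ n

theorem uniformPowerDecayOn_empty (f : X → A) : UniformPowerDecayOn f ∅ :=
  ⟨1, one_pos, 1 / 2, by norm_num, by norm_num, by simp⟩

theorem UniformPowerDecayOn.mono {f : X → A} {S T : Set X} (hT : UniformPowerDecayOn f T)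
    (hST : S ⊆ T) : UniformPowerDecayOn f S :=
  let ⟨C, hC, r, hr₀, hr₁, h⟩ := hT
  ⟨C, hC, r, hr₀, hr₁, fun t ht => h t (hST ht)⟩

theorem UniformPowerDecayOn.union {f : X → A} {S T : Set X} (hS : UniformPowerDecayOn f S)
    (hT : UniformPowerDecayOn f T) : UniformPowerDecayOn f (S ∪ T) := by
  obtain ⟨C, hC, r, hr₀, hr₁, hS⟩ := hS
  obtain ⟨D, hD, q, hq₀, hq₁, hT⟩ := hT
  refine ⟨max C D, lt_max_of_lt_left hC, max r q, lt_max_of_lt_left hr₀, max_lt hr₁ hq₁, ?_⟩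
  rintro t (ht | ht) n
  · calc ‖f t ^ n‖ ≤ C * r ^ n := hS t ht n
      _ ≤ max C D * max r q ^ n := by gcongr <;> simp
  · calc ‖f t ^ n‖ ≤ D * q ^ n := hT t ht n
      _ ≤ max C D * max r q ^ n := by gcongr <;> simp

theorem norm_pow_le_mul_pow_of_norm_pow_le {a : A} {N : ℕ} {C r : ℝ} (hN : 0 < N)
    (hperiod : ‖a ^ N‖ ≤ r ^ N) (hinit : ∀ k < N, ‖a ^ k‖ ≤ C * r ^ k) (m : ℕ) :
    ‖a ^ m‖ ≤ C * r ^ m := by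
  induction m using Nat.strong_induction_on with
  | _ m ih =>
    rcases lt_or_ge m N with hm | hm
    · exact hinit m hm
    obtain ⟨k, rfl⟩ := Nat.exists_eq_add_of_le' hm
    calc ‖a ^ (k + N)‖ ≤ ‖a ^ k‖ * ‖a ^ N‖ := pow_add a k N ▸ norm_mul_le _ _
      _ ≤ C * r ^ k * r ^ N := by
          gcongr
          · exact (norm_nonneg _).trans (ih k (by omega))
          · exact ih k (by omega)
      _ = C * r ^ (k + N) := by ring

end NormedRing

section Banach

variable {X A : Type*} [NormedRing A] [NormedAlgebra ℂ A] [CompleteSpace A]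

theorem eventually_norm_pow_lt_pow (a : A) {r : ℝ}
    (hr : spectralRadius ℂ a < ENNReal.ofReal r) :
    ∀ᶠ n : ℕ in atTop, ‖a ^ n‖ < r ^ n := by
  have hr₀ : 0 ≤ r := by
    by_contra! h
    simp [ENNReal.ofReal_of_nonpos h.le] at hr
  have hgelfand := spectrum.pow_norm_pow_one_div_tendsto_nhds_spectralRadius a
  filter_upwards [hgelfand.eventually_lt_const hr, eventually_gt_atTop 0] with n hn hn₀
  rw [ENNReal.ofReal_lt_ofReal_iff_of_nonneg (by positivity), one_div,
    Real.rpow_inv_lt_iff_of_pos (norm_nonneg _) hr₀ (by positivity), Real.rpow_natCast] at hn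
  exact hn

theorem exists_mem_nhds_uniformPowerDecayOn [TopologicalSpace X] {f : X → A} {x : X}
    (hf : ContinuousAt f x) (hx : spectralRadius ℂ (f x) < 1) :
    ∃ U ∈ 𝓝 x, UniformPowerDecayOn f U := by
  obtain ⟨r, -, hρr, hr₁⟩ := ENNReal.lt_iff_exists_real_btwn.mp hx
  have hr₀ : 0 < r := ENNReal.ofReal_pos.mp (bot_le.trans_lt hρr)
  rw [ENNReal.ofReal_lt_one] at hr₁
  obtain ⟨N, hN, hN₀⟩ :=
    ((eventually_norm_pow_lt_pow (f x) hρr).and (eventually_gt_atTop 0)).exists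
  obtain ⟨C, hC, hC₀⟩ : ∃ C : ℝ, (∀ k ∈ Set.Iio N, ‖f x ^ k‖ < C * r ^ k) ∧ 0 < C := by
    refine (((eventually_all_finite (Set.finite_Iio N)).mpr fun k _ => ?_).and
      (eventually_gt_atTop 0)).exists
    exact (tendsto_id.atTop_mul_const (pow_pos hr₀ k)).eventually_gt_atTop _
  have hcont (k : ℕ) : ContinuousAt (fun s => ‖f s ^ k‖) x := (hf.pow k).norm
  have hU : ∀ᶠ s in 𝓝 x, (∀ k ∈ Set.Iio N, ‖f s ^ k‖ < C * r ^ k) ∧ ‖f s ^ N‖ < r ^ N :=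
    ((eventually_all_finite (Set.finite_Iio N)).mpr fun k hk =>
      (hcont k).eventually_lt continuousAt_const (hC k hk)).and
      ((hcont N).eventually_lt continuousAt_const hN)
  refine ⟨_, hU, C, hC₀, r, hr₀, hr₁, fun s ⟨hinit, hperiod⟩ => ?_⟩
  exact norm_pow_le_mul_pow_of_norm_pow_le hN₀ hperiod.le fun k hk => (hinit k hk).le

end Banach

theorem uniform_power_decay_on_compact {B : Type*} [NormedAddCommGroup B]
    [NormedSpace ℂ B] [CompleteSpace B] (K : Set ℝ) (hK : IsCompact K)
    (P : ℝ → B →L[ℂ] B) (hP : Continuous P)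
    (hρ : ∀ t ∈ K, spectralRadius ℂ (P t) < 1) :
    ∃ C > 0, ∃ r : ℝ, 0 < r ∧ r < 1 ∧ ∀ t ∈ K, ∀ n : ℕ, ‖(P t) ^ n‖ ≤ C * r ^ n := by
  have hdecay : UniformPowerDecayOn P K := by
    refine hK.induction_on (uniformPowerDecayOn_empty P) (fun _ _ hST hT => hT.mono hST)
      (fun _ _ => .union) fun t ht => ?_
    obtain ⟨U, hU, hUdecay⟩ := exists_mem_nhds_uniformPowerDecayOn hP.continuousAt (hρ t ht)
    exact ⟨U, mem_nhdsWithin_of_mem_nhds hU, hUdecay⟩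
  exact hdecay
end

section
/- Let f : ℝ → ℝ be continuous, nonnegative wlog integrable with ∫_ℝ f = 1, let S_1,…,S_n ∈ ℝ, and define l_n(x) = n^{−1/2} ∑_{k=1}^n f(S_k − √n x). Then for any rationals a < b and ε > 0, ∫_a^b l_n(x) dx ≤ (1/n)·#{k ≤ n : n^{−1/2} S_k ∈ [a−ε, b+ε]} + ∫_{√n ε}^∞ f(x) dx, and ∫_a^b l_n(x) dx ≥ (1/n)·#{k ≤ n : n^{−1/2} S_k ∈ [a+ε, b−ε]} · ∫_{−ε√n}^{ε√n} f(x) dx. -/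
/-!
Substituting `y = S k - √n x` turns the `k`-th term into `n⁻¹` times the mass of `f` on the window
`[S k - √n b, S k - √n a]`. That window contains `[-ε√n, ε√n]` when `S k / √n ∈ [a + ε, b - ε]`
and lies in `{|y| ≥ ε√n}` when `S k / √n ∉ [a - ε, b + ε]`; otherwise its mass is at most
`∫ f = 1`. Summing over `k` gives both bounds, the symmetry of `f` identifying the two tails.
-/

open MeasureTheory Set
open scoped Classical

theorem Finset.sum_le_card_filter_add_card_mul {ι : Type*} (s : Finset ι) (p : ι → Prop)
    [DecidablePred p] {g : ι → ℝ} {T : ℝ} (hT : 0 ≤ T) (hle : ∀ i ∈ s, g i ≤ 1)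
    (hout : ∀ i ∈ s, ¬p i → g i ≤ T) :
    ∑ i ∈ s, g i ≤ (s.filter p).card + s.card * T := by
  rw [← Finset.sum_filter_add_sum_filter_not s p]
  gcongr
  · simpa using Finset.sum_le_card_nsmul _ g 1 fun i hi => hle i (Finset.mem_of_mem_filter i hi)
  · calc ∑ i ∈ s.filter (¬p ·), g i ≤ (s.filter (¬p ·)).card * T := by
          simpa using Finset.sum_le_card_nsmul _ g T fun i hi =>
            hout i (Finset.mem_of_mem_filter i hi) (Finset.mem_filter.mp hi).2
      _ ≤ s.card * T := by gcongr; exact Finset.filter_subset _ s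

theorem Finset.card_filter_mul_le_sum {ι : Type*} (s : Finset ι) (p : ι → Prop)
    [DecidablePred p] {g : ι → ℝ} {M : ℝ} (hnn : ∀ i ∈ s, 0 ≤ g i)
    (hin : ∀ i ∈ s, p i → M ≤ g i) :
    (s.filter p).card * M ≤ ∑ i ∈ s, g i :=
  calc (s.filter p).card * M ≤ ∑ i ∈ s.filter p, g i := by
        simpa using Finset.card_nsmul_le_sum _ g M fun i hi =>
          hin i (Finset.mem_of_mem_filter i hi) (Finset.mem_filter.mp hi).2
    _ ≤ ∑ i ∈ s, g i :=
        Finset.sum_le_sum_of_subset_of_nonneg (Finset.filter_subset p s) fun i hi _ => hnn i hi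

section Window

variable {f : ℝ → ℝ}

theorem intervalIntegrable_comp_sub_mul (hint : Integrable f) (s c : ℝ) (hc : c ≠ 0) (a b : ℝ) :
    IntervalIntegrable (fun x => f (s - c * x)) volume a b :=
  ((hint.comp_sub_left s).comp_mul_left' hc).intervalIntegrable

theorem intervalIntegral_le_integral (hnn : ∀ x, 0 ≤ f x) (hint : Integrable f) {u v : ℝ}
    (huv : u ≤ v) : ∫ x in u..v, f x ≤ ∫ x, f x := by
  rw [intervalIntegral.integral_of_le huv]
  exact setIntegral_le_integral hint (.of_forall hnn)

theorem intervalIntegral_le_integral_Ioi (hnn : ∀ x, 0 ≤ f x) (hsymm : ∀ x, f (-x) = f x)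
    (hint : Integrable f) {u v δ : ℝ} (huv : u ≤ v) (hout : δ ≤ u ∨ v ≤ -δ) :
    ∫ x in u..v, f x ≤ ∫ x in Ioi δ, f x := by
  rw [intervalIntegral.integral_of_le huv]
  rcases hout with hδu | hvδ
  · exact setIntegral_mono_set hint.integrableOn (.of_forall hnn)
      (Ioc_subset_Ioi_self.trans (Ioi_subset_Ioi hδu)).eventuallyLE
  · calc ∫ x in Ioc u v, f x ≤ ∫ x in Iic (-δ), f x :=
          setIntegral_mono_set hint.integrableOn (.of_forall hnn)
            (Ioc_subset_Iic_self.trans (Iic_subset_Iic.mpr hvδ)).eventuallyLE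
      _ = ∫ x in Ioi δ, f x := by simp_rw [← integral_comp_neg_Ioi, hsymm]

theorem integral_comp_sub_mul_le_integral_Ioi (hnn : ∀ x, 0 ≤ f x) (hsymm : ∀ x, f (-x) = f x)
    (hint : Integrable f) {a b c ε s : ℝ} (hc : 0 < c) (hab : a ≤ b)
    (hout : c⁻¹ * s ∉ Icc (a - ε) (b + ε)) :
    ∫ y in s - c * b..s - c * a, f y ≤ ∫ y in Ioi (c * ε), f y := by
  refine intervalIntegral_le_integral_Ioi hnn hsymm hint (by nlinarith) ?_
  rw [mem_Icc, not_and_or, not_le, not_le, inv_mul_lt_iff₀ hc, lt_inv_mul_iff₀ hc] at hout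
  rcases hout with h | h
  · right; linarith
  · left; linarith

theorem integral_Icc_le_integral_comp_sub_mul (hnn : ∀ x, 0 ≤ f x) (hint : Integrable f)
    {a b c ε s : ℝ} (hc : 0 < c) (hε : 0 ≤ ε) (hin : c⁻¹ * s ∈ Icc (a + ε) (b - ε)) :
    ∫ y in -ε * c..ε * c, f y ≤ ∫ y in s - c * b..s - c * a, f y := by
  rw [mem_Icc, le_inv_mul_iff₀ hc, inv_mul_le_iff₀ hc] at hin
  exact intervalIntegral.integral_mono_interval (by linarith) (by nlinarith) (by linarith)
    (.of_forall hnn) hint.intervalIntegrable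

theorem integral_mul_sum_comp_sub_mul (hint : Integrable f) {ι : Type*}
    (s : Finset ι) (S : ι → ℝ) {c : ℝ} (hc : c ≠ 0) (a b : ℝ) :
    ∫ x in a..b, c⁻¹ * ∑ k ∈ s, f (S k - c * x)
      = (c * c)⁻¹ * ∑ k ∈ s, ∫ y in S k - c * b..S k - c * a, f y := by
  rw [intervalIntegral.integral_const_mul,
    intervalIntegral.integral_finsetSum fun k _ => intervalIntegrable_comp_sub_mul hint _ _ hc a b]
  simp_rw [intervalIntegral.integral_comp_sub_mul _ hc, smul_eq_mul, ← Finset.mul_sum, mul_inv,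
    mul_assoc]

end Window

section Occupation

variable {f : ℝ → ℝ} {ι : Type*} (s : Finset ι) (S : ι → ℝ) {a b c : ℝ}

theorem integral_occupation_le (hnn : ∀ x, 0 ≤ f x) (hsymm : ∀ x, f (-x) = f x)
    (hint : Integrable f) (h1 : ∫ x, f x ≤ 1) (hc : 0 < c) (hab : a ≤ b) (ε : ℝ) :
    ∫ x in a..b, c⁻¹ * ∑ k ∈ s, f (S k - c * x)
      ≤ (c * c)⁻¹ * ((s.filter fun k => c⁻¹ * S k ∈ Icc (a - ε) (b + ε)).card
          + s.card * ∫ y in Ioi (c * ε), f y) := by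
  rw [integral_mul_sum_comp_sub_mul hint s S hc.ne']
  gcongr
  refine Finset.sum_le_card_filter_add_card_mul s _
    (setIntegral_nonneg measurableSet_Ioi fun x _ => hnn x) (fun k _ => ?_) fun k _ hk => ?_
  · exact (intervalIntegral_le_integral hnn hint (by nlinarith)).trans h1
  · exact integral_comp_sub_mul_le_integral_Ioi hnn hsymm hint hc hab hk

theorem le_integral_occupation (hnn : ∀ x, 0 ≤ f x) (hint : Integrable f) (hc : 0 < c)
    (hab : a ≤ b) {ε : ℝ} (hε : 0 ≤ ε) :
    (c * c)⁻¹ * ((s.filter fun k => c⁻¹ * S k ∈ Icc (a + ε) (b - ε)).card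
        * ∫ y in -ε * c..ε * c, f y)
      ≤ ∫ x in a..b, c⁻¹ * ∑ k ∈ s, f (S k - c * x) := by
  rw [integral_mul_sum_comp_sub_mul hint s S hc.ne']
  gcongr
  refine Finset.card_filter_mul_le_sum s _ (fun k _ => ?_) fun k _ hk => ?_
  · exact intervalIntegral.integral_nonneg (by nlinarith) fun x _ => hnn x
  · exact integral_Icc_le_integral_comp_sub_mul hnn hint hc hε hk

end Occupation

theorem occupation_sandwich_general (f : ℝ → ℝ) (hnn : ∀ x, 0 ≤ f x)
    (hsymm : ∀ x, f (-x) = f x) (hint : Integrable f) (h1 : (∫ x, f x) = 1)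
    (n : ℕ) (hn : 1 ≤ n) (S : ℕ → ℝ) (a b : ℚ) (hab : a < b) (ε : ℚ) (hε : 0 < ε) :
    (∫ x in (a:ℝ)..(b:ℝ),
        (Real.sqrt n)⁻¹ * ∑ k ∈ Finset.Icc 1 n, f (S k - Real.sqrt n * x))
      ≤ (((Finset.Icc 1 n).filter
            (fun k => (Real.sqrt n)⁻¹ * S k ∈ Set.Icc ((a:ℝ) - ε) ((b:ℝ) + ε))).card : ℝ) / n
        + ∫ x in Set.Ioi (Real.sqrt n * ε), f x
    ∧
    (∫ x in (a:ℝ)..(b:ℝ),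
        (Real.sqrt n)⁻¹ * ∑ k ∈ Finset.Icc 1 n, f (S k - Real.sqrt n * x))
      ≥ (((Finset.Icc 1 n).filter
            (fun k => (Real.sqrt n)⁻¹ * S k ∈ Set.Icc ((a:ℝ) + ε) ((b:ℝ) - ε))).card : ℝ) / n
        * ∫ x in (-(ε:ℝ) * Real.sqrt n)..((ε:ℝ) * Real.sqrt n), f x := by
  have hn0 : (0 : ℝ) < n := by exact_mod_cast hn
  have hc : 0 < Real.sqrt n := Real.sqrt_pos.mpr hn0
  have hcc : Real.sqrt n * Real.sqrt n = n := Real.mul_self_sqrt hn0.le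
  have hcard : ((Finset.Icc 1 n).card : ℝ) = n := by simp
  have hab' : (a : ℝ) ≤ b := by exact_mod_cast hab.le
  have hε' : (0 : ℝ) ≤ ε := by exact_mod_cast hε.le
  constructor
  · refine (integral_occupation_le _ S hnn hsymm hint h1.le hc hab' ε).trans_eq ?_
    rw [hcc, hcard]
    field_simp
  · refine le_trans (le_of_eq ?_) (le_integral_occupation _ S hnn hint hc hab' hε')
    rw [hcc]
    ring

theorem occupation_sandwich (f : ℝ → ℝ) (hf : Continuous f) (hnn : ∀ x, 0 ≤ f x)
    (hsymm : ∀ x, f (-x) = f x) (hint : Integrable f) (h1 : (∫ x, f x) = 1)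
    (n : ℕ) (hn : 1 ≤ n) (S : ℕ → ℝ) (a b : ℚ) (hab : a < b) (ε : ℚ) (hε : 0 < ε) :
    (∫ x in (a:ℝ)..(b:ℝ),
        (Real.sqrt n)⁻¹ * ∑ k ∈ Finset.Icc 1 n, f (S k - Real.sqrt n * x))
      ≤ (((Finset.Icc 1 n).filter
            (fun k => (Real.sqrt n)⁻¹ * S k ∈ Set.Icc ((a:ℝ) - ε) ((b:ℝ) + ε))).card : ℝ) / n
        + ∫ x in Set.Ioi (Real.sqrt n * ε), f x
    ∧
    (∫ x in (a:ℝ)..(b:ℝ),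
        (Real.sqrt n)⁻¹ * ∑ k ∈ Finset.Icc 1 n, f (S k - Real.sqrt n * x))
      ≥ (((Finset.Icc 1 n).filter
            (fun k => (Real.sqrt n)⁻¹ * S k ∈ Set.Icc ((a:ℝ) + ε) ((b:ℝ) - ε))).card : ℝ) / n
        * ∫ x in (-(ε:ℝ) * Real.sqrt n)..((ε:ℝ) * Real.sqrt n), f x :=
  occupation_sandwich_general f hnn hsymm hint h1 n hn S a b hab ε hε
end
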